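/- Let X be a cluster-tilting subcategory of a triangulated category C with split idempotents, and let A →f B →g D →h ΣA be a distinguished triangle in C. Then ḡ is a monomorphism in the quotient category C/X if and only if f̄ = 0 in C/X, that is, if and only if f factors through an object of X. -/

import Mathlib

open CategoryTheory CategoryTheory.Limits CategoryTheory.Pretriangulated

universe v u

variable {C : Type u} [Category.{v} C] [Preadditive C] [HasZeroObject C]
  [HasShift C ℤ] [∀ n : ℤ, (shiftFunctor C n).Additive] [Pretriangulated C]

/-- `f` factors through an object satisfying `X`. -/
def FactorsThru (X : C → Prop) {A B : C} (f : A ⟶ B) : Prop :=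
  ∃ (X₀ : C) (g : A ⟶ X₀) (h : X₀ ⟶ B), X X₀ ∧ g ≫ h = f

/-- The hom relation on `C` identifying two morphisms when their difference factors
through an object of `X`; the quotient category `C/X` is the quotient by this relation. -/
def homRelOf (X : C → Prop) : HomRel C :=
  fun {A B : C} (f g : A ⟶ B) => FactorsThru X (f - g)

/-- The additive quotient category `C/X`. -/
abbrev QuotCat (X : C → Prop) := CategoryTheory.Quotient (homRelOf X)

/-- The quotient functor `C ⥤ C/X`, sending a morphism `f` to its class `f̄`. -/
abbrev quotFunctor (X : C → Prop) : C ⥤ QuotCat X := Quotient.functor _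

/-- `X` is a full additive subcategory: it contains the zero objects and is closed under
isomorphisms, finite direct sums and direct summands. -/
structure IsAdditiveClosed (X : C → Prop) : Prop where
  zero : ∀ Z : C, IsZero Z → X Z
  iso : ∀ {A B : C}, (A ≅ B) → X A → X B
  biprod : ∀ {A B : C} (b : BinaryBicone A B), Nonempty b.IsBilimit → X A → X B → X b.pt
  summand : ∀ {A B : C} (i : A ⟶ B) (p : B ⟶ A), i ≫ p = 𝟙 A → X B → X A

/-- `X` is a cluster-tilting subcategory of the triangulated category `C`:
it is a full additive subcategory such that (i) `Hom(X₁, ΣX₂) = 0` for all `X₁, X₂ ∈ X`, and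
(ii) every object `A` fits into a distinguished triangle `X₀ ⟶ X₁ ⟶ A ⟶ ΣX₀` with
`X₀, X₁ ∈ X`. -/
structure IsClusterTilting (X : C → Prop) extends IsAdditiveClosed X : Prop where
  hom_shift_zero : ∀ {X₁ X₂ : C}, X X₁ → X X₂ → ∀ f : X₁ ⟶ X₂⟦(1 : ℤ)⟧, f = 0
  exists_triangle : ∀ A : C, ∃ (X₀ X₁ : C) (f : X₀ ⟶ X₁) (g : X₁ ⟶ A) (h : A ⟶ X₀⟦(1 : ℤ)⟧),
    X X₀ ∧ X X₁ ∧ Triangle.mk f g h ∈ distTriang C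

/-- `f : A ⟶ B` is `X`-monic: every morphism from `A` to an object of `X` factors through `f`. -/
def XMonic (X : C → Prop) {A B : C} (f : A ⟶ B) : Prop :=
  ∀ X' : C, X X' → ∀ u : A ⟶ X', ∃ v : B ⟶ X', f ≫ v = u

/-- `f : A ⟶ B` is `X`-epic: every morphism from an object of `X` to `B` factors through `f`. -/
def XEpic (X : C → Prop) {A B : C} (f : A ⟶ B) : Prop :=
  ∀ X' : C, X X' → ∀ u : X' ⟶ B, ∃ v : X' ⟶ A, v ≫ f = u

/-!
Cluster tilting gives every object `T` a distinguished triangle `T ⟶ X₁ ⟶ X₂ ⟶ T⟦1⟧` with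
`X₁, X₂ ∈ X`; as `Hom(X₂, X⟦1⟧) = 0`, the map `ι : T ⟶ X₁` is a left `X`-approximation.
If `f` factors through `X` and `u ≫ g` factors through `X`, the latter factors as `ι ≫ k`, and
chasing `k` through the two triangles (using `Hom(X₂, X₀⟦1⟧) = 0` for the `X₀` that `f` passes
through) writes `u = ι ≫ e + v ≫ f`, so `u` factors through `X`: this cancellation is the
injectivity of `ḡ`. Conversely `f ≫ g = 0`, so `f̄ = 0` once `ḡ` is a monomorphism.
-/

variable {X : C → Prop}

namespace FactorsThru

open ZeroObject in
omit [HasShift C ℤ] [∀ n : ℤ, (shiftFunctor C n).Additive] [Pretriangulated C] in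
lemma zero (hX : IsAdditiveClosed X) {A B : C} : FactorsThru X (0 : A ⟶ B) :=
  ⟨0, 0, 0, hX.zero _ (isZero_zero C), by simp⟩

omit [Preadditive C] [HasZeroObject C] [HasShift C ℤ] [∀ n : ℤ, (shiftFunctor C n).Additive]
  [Pretriangulated C] in
lemma precomp {A' A B : C} {f : A ⟶ B} (hf : FactorsThru X f) (k : A' ⟶ A) :
    FactorsThru X (k ≫ f) := by
  obtain ⟨X₀, a, b, hX₀, rfl⟩ := hf
  exact ⟨X₀, k ≫ a, b, hX₀, by simp⟩

omit [Preadditive C] [HasZeroObject C] [HasShift C ℤ] [∀ n : ℤ, (shiftFunctor C n).Additive]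
  [Pretriangulated C] in
lemma comp {A B B' : C} {f : A ⟶ B} (hf : FactorsThru X f) (k : B ⟶ B') :
    FactorsThru X (f ≫ k) := by
  obtain ⟨X₀, a, b, hX₀, rfl⟩ := hf
  exact ⟨X₀, a, b ≫ k, hX₀, by simp⟩

omit [HasZeroObject C] [HasShift C ℤ] [∀ n : ℤ, (shiftFunctor C n).Additive]
  [Pretriangulated C] in
lemma neg {A B : C} {f : A ⟶ B} (hf : FactorsThru X f) : FactorsThru X (-f) := by
  obtain ⟨X₀, a, b, hX₀, rfl⟩ := hf
  exact ⟨X₀, a, -b, hX₀, by simp⟩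

lemma add (hX : IsAdditiveClosed X) {A B : C} {f₁ f₂ : A ⟶ B}
    (h₁ : FactorsThru X f₁) (h₂ : FactorsThru X f₂) : FactorsThru X (f₁ + f₂) := by
  obtain ⟨P, a₁, b₁, hP, rfl⟩ := h₁
  obtain ⟨Q, a₂, b₂, hQ, rfl⟩ := h₂
  refine ⟨P ⊞ Q, biprod.lift a₁ a₂, biprod.desc b₁ b₂,
    hX.biprod _ ⟨BinaryBiproduct.isBilimit P Q⟩ hP hQ, by simp⟩

end FactorsThru

lemma IsAdditiveClosed.congruence (hX : IsAdditiveClosed X) : Congruence (homRelOf X) where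
  equivalence :=
    { refl := fun f => by simpa [homRelOf] using FactorsThru.zero hX
      symm := fun h => by simpa [homRelOf] using h.neg
      trans := fun h₁ h₂ => by simpa [homRelOf] using h₁.add hX h₂ }
  comp_left := fun f _ _ h => by simpa [homRelOf, Preadditive.comp_sub] using h.precomp f
  comp_right := fun g h => by simpa [homRelOf, Preadditive.sub_comp] using h.comp g

lemma quotFunctor_map_eq_iff (hX : IsAdditiveClosed X) {A B : C} (f f' : A ⟶ B) :
    (quotFunctor X).map f = (quotFunctor X).map f' ↔ FactorsThru X (f - f') :=
  have := hX.congruence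
  Quotient.functor_map_eq_iff _ f f'

namespace IsClusterTilting

lemma exists_approximation_distTriang (hX : IsClusterTilting X) (T : C) :
    ∃ (X₁ X₂ : C) (ι : T ⟶ X₁) (π : X₁ ⟶ X₂) (δ : X₂ ⟶ T⟦(1 : ℤ)⟧),
      X X₁ ∧ X X₂ ∧ Triangle.mk ι π δ ∈ distTriang C := by
  obtain ⟨X₁, X₂, α, β, γ, h₁, h₂, hT⟩ := hX.exists_triangle (T⟦(1 : ℤ)⟧)
  let e := shiftFunctorCompIsoId C (1 : ℤ) (-1) (add_neg_cancel 1)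
  have comm₃ : β ≫ (e.inv.app T)⟦(1 : ℤ)⟧' =
      𝟙 X₂ ≫ β ≫ (shiftEquiv C (1 : ℤ)).counitIso.inv.app (T⟦(1 : ℤ)⟧) := by
    rw [Category.id_comp, shift_shiftFunctorCompIsoId_add_neg_cancel_inv_app]; rfl
  refine ⟨X₁, X₂, e.inv.app T ≫ (-γ⟦(-1 : ℤ)⟧' ≫ e.hom.app X₁), α, β, h₁, h₂,
    isomorphic_distinguished _ (inv_rot_of_distTriang _ hT) _ ?_⟩
  exact Triangle.isoMk _ _ (e.app T).symm (Iso.refl _) (Iso.refl _) (Category.comp_id _)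
    ((Category.comp_id α).trans (Category.id_comp α).symm) comm₃

lemma exists_comp_eq_of_distTriang (hX : IsClusterTilting X) {T X₁ X₂ : C} {ι : T ⟶ X₁}
    {π : X₁ ⟶ X₂} {δ : X₂ ⟶ T⟦(1 : ℤ)⟧} (hT : Triangle.mk ι π δ ∈ distTriang C) (h₂ : X X₂)
    {X' : C} (hX' : X X') (c : T ⟶ X') : ∃ c' : X₁ ⟶ X', ι ≫ c' = c := by
  obtain ⟨c', hc', -⟩ := complete_distinguished_triangle_morphism₂ _ _ hT
    (contractible_distinguished X') c 0 ((hX.hom_shift_zero h₂ hX' _).trans zero_comp.symm)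
  exact ⟨c', hc'.trans (Category.comp_id c)⟩

end IsClusterTilting

lemma exists_eq_comp_add_comp_of_distTriang (hX : IsClusterTilting X) {A B D : C}
    {f : A ⟶ B} {g : B ⟶ D} {h : D ⟶ A⟦(1 : ℤ)⟧} (hT : Triangle.mk f g h ∈ distTriang C)
    (hf : FactorsThru X f) {T X₁ X₂ : C} {ι : T ⟶ X₁} {π : X₁ ⟶ X₂} {δ : X₂ ⟶ T⟦(1 : ℤ)⟧}
    (hι : Triangle.mk ι π δ ∈ distTriang C) (h₂ : X X₂) (u : T ⟶ B) (k : X₁ ⟶ D)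
    (hk : ι ≫ k = u ≫ g) : ∃ (e : X₁ ⟶ B) (v : T ⟶ A), u = ι ≫ e + v ≫ f := by
  obtain ⟨X₀, a, b, hX₀, hab⟩ := hf
  have hgh : g ≫ h = 0 := comp_distTriang_mor_zero₂₃ _ hT
  have hιπ : ι ≫ π = 0 := comp_distTriang_mor_zero₁₂ _ hι
  have hιkh : ι ≫ k ≫ h = 0 := by rw [reassoc_of% hk, hgh, comp_zero]
  obtain ⟨m, hm⟩ : ∃ m : X₂ ⟶ A⟦(1 : ℤ)⟧, k ≫ h = π ≫ m := Triangle.yoneda_exact₂ _ hι _ hιkh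
  have hmf : m ≫ f⟦(1 : ℤ)⟧' = 0 := by
    rw [← hab, Functor.map_comp, ← Category.assoc, hX.hom_shift_zero h₂ hX₀ (m ≫ a⟦(1 : ℤ)⟧'),
      zero_comp]
  obtain ⟨n, hn⟩ : ∃ n : X₂ ⟶ D, m = n ≫ h := Triangle.coyoneda_exact₁ _ hT m hmf
  have hkh : (k - π ≫ n) ≫ h = 0 := by rw [Preadditive.sub_comp, hm, hn, Category.assoc, sub_self]
  obtain ⟨e, he⟩ : ∃ e : X₁ ⟶ B, k - π ≫ n = e ≫ g := Triangle.coyoneda_exact₃ _ hT _ hkh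
  have hug : (u - ι ≫ e) ≫ g = 0 := by
    rw [Preadditive.sub_comp, Category.assoc, ← he, Preadditive.comp_sub, hk, reassoc_of% hιπ,
      zero_comp, sub_zero, sub_self]
  obtain ⟨v, hv⟩ : ∃ v : T ⟶ A, u - ι ≫ e = v ≫ f := Triangle.coyoneda_exact₂ _ hT _ hug
  exact ⟨e, v, by rw [← hv, add_sub_cancel]⟩

lemma FactorsThru.of_comp_of_distTriang (hX : IsClusterTilting X) {A B D : C}
    {f : A ⟶ B} {g : B ⟶ D} {h : D ⟶ A⟦(1 : ℤ)⟧} (hT : Triangle.mk f g h ∈ distTriang C)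
    (hf : FactorsThru X f) {T : C} {u : T ⟶ B} (hu : FactorsThru X (u ≫ g)) :
    FactorsThru X u := by
  obtain ⟨X₁, X₂, ι, π, δ, h₁, h₂, hι⟩ := hX.exists_approximation_distTriang T
  obtain ⟨X', c, d, hX', hcd⟩ := hu
  obtain ⟨c', rfl⟩ := hX.exists_comp_eq_of_distTriang hι h₂ hX' c
  obtain ⟨e, v, rfl⟩ := exists_eq_comp_add_comp_of_distTriang hX hT hf hι h₂ u (c' ≫ d)
    (by rw [← hcd, Category.assoc])
  exact FactorsThru.add hX.toIsAdditiveClosed ⟨X₁, ι, e, h₁, rfl⟩ (hf.precomp v)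

theorem mono_iff_factorsThru_general
    (X : C → Prop) (hX : IsClusterTilting X)
    {A B D : C} (f : A ⟶ B) (g : B ⟶ D) (h : D ⟶ A⟦(1 : ℤ)⟧)
    (hT : Triangle.mk f g h ∈ distTriang C) :
    Mono ((quotFunctor X).map g) ↔ FactorsThru X f := by
  have hXadd := hX.toIsAdditiveClosed
  constructor
  · intro hg
    have hfg : f ≫ g = 0 := comp_distTriang_mor_zero₁₂ _ hT
    have : (quotFunctor X).map f ≫ (quotFunctor X).map g =
        (quotFunctor X).map 0 ≫ (quotFunctor X).map g := by
      rw [← Functor.map_comp, ← Functor.map_comp, hfg, zero_comp]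
    simpa only [sub_zero] using (quotFunctor_map_eq_iff hXadd f 0).mp (cancel_mono _ |>.mp this)
  · refine fun hf => ⟨fun {Z} p q hpq => ?_⟩
    obtain ⟨p, rfl⟩ := (quotFunctor X).map_surjective (X := Z.as) p
    obtain ⟨q, rfl⟩ := (quotFunctor X).map_surjective (X := Z.as) q
    simp only [← Functor.map_comp, quotFunctor_map_eq_iff hXadd, ← Preadditive.sub_comp] at hpq ⊢
    exact FactorsThru.of_comp_of_distTriang hX hT hf hpq

/-- For a distinguished triangle `A ⟶ B ⟶ D ⟶ ΣA` over a cluster-tilting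
subcategory `X`, the class `ḡ` is a monomorphism in `C/X` iff `f` factors through `X`. -/
theorem mono_iff_factorsThru [IsIdempotentComplete C]
    (X : C → Prop) (hX : IsClusterTilting X)
    {A B D : C} (f : A ⟶ B) (g : B ⟶ D) (h : D ⟶ A⟦(1 : ℤ)⟧)
    (hT : Triangle.mk f g h ∈ distTriang C) :
    Mono ((quotFunctor X).map g) ↔ FactorsThru X f :=
  mono_iff_factorsThru_general X hX f g h hT
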